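/- Let V be a real Hilbert space with inner product a, and P₀,…,P_N orthogonal projections satisfying the stable decomposition assumption with constant C₀ (including the coarse space) and the strengthened Cauchy–Schwarz assumption with matrix ℰ among the local spaces. Let P = Σ_{i=0}^N Pᵢ. Then for every e ∈ V and τ > 0, a((I − τP)e, (I − τP)e) ≤ (1 − 2τ/(2+C₀) + 2(‖ℰ‖₂² + 1)τ²) a(e,e). -/

import Mathlib

/-! The stable decomposition gives `‖e‖² ≤ C₀ Σᵢ ‖Pᵢe‖² = C₀ ⟪e, Pe⟫`, a lower bound for the
first-order term of `‖e - τPe‖² = ‖e‖² - 2τ⟪e, Pe⟫ + τ²‖Pe‖²`. For the second-order term, the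
strengthened Cauchy–Schwarz inequality bounds the local part by a quadratic form in the numbers
`‖Pᵢe‖`, so that `‖Σᵢ₌₁ᴺ Pᵢe‖² ≤ ‖ℰ‖₂ Σᵢ ‖Pᵢe‖² = ‖ℰ‖₂ ⟪e, Σᵢ₌₁ᴺ Pᵢe⟫`, whence
`‖Σᵢ₌₁ᴺ Pᵢe‖ ≤ ‖ℰ‖₂ ‖e‖`; together with `‖P₀e‖ ≤ ‖e‖` this gives `‖Pe‖² ≤ 2(‖ℰ‖₂² + 1)‖e‖²`. -/

open RealInnerProductSpace

/-- Spectral norm (operator 2-norm) of a real matrix. -/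
noncomputable def matSpectralNorm {N : ℕ} (E : Matrix (Fin N) (Fin N) ℝ) : ℝ :=
  ‖(Matrix.toEuclideanCLM (𝕜 := ℝ) E : EuclideanSpace ℝ (Fin N) →L[ℝ] EuclideanSpace ℝ (Fin N))‖

open Matrix

lemma dotProduct_mulVec_le_matSpectralNorm_mul {N : ℕ} (E : Matrix (Fin N) (Fin N) ℝ)
    (x : Fin N → ℝ) : x ⬝ᵥ E *ᵥ x ≤ matSpectralNorm E * (x ⬝ᵥ x) := by
  set y : EuclideanSpace ℝ (Fin N) := WithLp.toLp 2 x
  set T : EuclideanSpace ℝ (Fin N) →L[ℝ] EuclideanSpace ℝ (Fin N) := toEuclideanCLM (𝕜 := ℝ) E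
  have hy : ‖y‖ ^ 2 = x ⬝ᵥ x := by
    rw [← real_inner_self_eq_norm_sq, EuclideanSpace.inner_toLp_toLp, star_trivial]
  calc x ⬝ᵥ E *ᵥ x = ⟪y, T y⟫ := (inner_toEuclideanCLM E y y).symm
    _ ≤ ‖y‖ * ‖T y‖ := real_inner_le_norm _ _
    _ ≤ ‖y‖ * (‖T‖ * ‖y‖) := by gcongr; exact T.le_opNorm y
    _ = matSpectralNorm E * (x ⬝ᵥ x) := by rw [← hy, matSpectralNorm]; ring

section InnerProductSpace

variable {V : Type*} [NormedAddCommGroup V] [InnerProductSpace ℝ V]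

lemma norm_sum_sq_le_matSpectralNorm_mul {N : ℕ} (E : Matrix (Fin N) (Fin N) ℝ) (w : Fin N → V)
    (hE : ∀ i j, ⟪w i, w j⟫ ≤ E i j * ‖w i‖ * ‖w j‖) :
    ‖∑ i, w i‖ ^ 2 ≤ matSpectralNorm E * ∑ i, ‖w i‖ ^ 2 := by
  set x : Fin N → ℝ := fun i => ‖w i‖
  calc ‖∑ i, w i‖ ^ 2 = ∑ i, ∑ j, ⟪w i, w j⟫ := by
        rw [← real_inner_self_eq_norm_sq, sum_inner]
        simp only [inner_sum]
    _ ≤ ∑ i, ∑ j, E i j * x i * x j := by gcongr with i _ j _; exact hE i j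
    _ = x ⬝ᵥ E *ᵥ x := by
        simp only [dotProduct, mulVec, Finset.mul_sum]
        exact Finset.sum_congr rfl fun i _ => Finset.sum_congr rfl fun j _ => by ring
    _ ≤ matSpectralNorm E * (x ⬝ᵥ x) := dotProduct_mulVec_le_matSpectralNorm_mul E x
    _ = matSpectralNorm E * ∑ i, ‖w i‖ ^ 2 := by simp only [dotProduct, x, sq]

lemma norm_sq_eq_inner_of_proj {v p : V} {K : Submodule ℝ V} (hp : p ∈ K)
    (hproj : ∀ w ∈ K, ⟪p, w⟫ = ⟪v, w⟫) : ‖p‖ ^ 2 = ⟪v, p⟫ := by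
  rw [← real_inner_self_eq_norm_sq, hproj p hp]

lemma norm_le_of_proj {v p : V} {K : Submodule ℝ V} (hp : p ∈ K)
    (hproj : ∀ w ∈ K, ⟪p, w⟫ = ⟪v, w⟫) : ‖p‖ ≤ ‖v‖ := by
  have h : ‖p‖ ^ 2 ≤ ‖v‖ * ‖p‖ :=
    (norm_sq_eq_inner_of_proj hp hproj).trans_le (real_inner_le_norm v p)
  nlinarith [norm_nonneg p, norm_nonneg v]

lemma sum_norm_sq_eq_inner_sum_of_proj {ι : Type*} [Fintype ι] {Vs : ι → Submodule ℝ V}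
    {v : V} {p : ι → V} (hp : ∀ i, p i ∈ Vs i)
    (hproj : ∀ i, ∀ w ∈ Vs i, ⟪p i, w⟫ = ⟪v, w⟫) : ∑ i, ‖p i‖ ^ 2 = ⟪v, ∑ i, p i⟫ := by
  rw [inner_sum]
  exact Finset.sum_congr rfl fun i _ => norm_sq_eq_inner_of_proj (hp i) (hproj i)

lemma norm_sq_le_mul_sum_norm_sq_of_decomposition {ι : Type*} [Fintype ι]
    {Vs : ι → Submodule ℝ V} {v : V} {p : ι → V} {C₀ : ℝ} (hC₀ : 0 ≤ C₀)
    (hproj : ∀ i, ∀ w ∈ Vs i, ⟪p i, w⟫ = ⟪v, w⟫) {vi : ι → V} (hvi : ∀ i, vi i ∈ Vs i)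
    (hsum : v = ∑ i, vi i) (hstab : ∑ i, ‖vi i‖ ^ 2 ≤ C₀ * ‖v‖ ^ 2) :
    ‖v‖ ^ 2 ≤ C₀ * ∑ i, ‖p i‖ ^ 2 := by
  have h₁ : ‖v‖ ^ 2 ≤ ∑ i, ‖p i‖ * ‖vi i‖ :=
    calc ‖v‖ ^ 2 = ∑ i, ⟪p i, vi i⟫ := by
          rw [← real_inner_self_eq_norm_sq]
          nth_rw 2 [hsum]
          rw [inner_sum]
          exact Finset.sum_congr rfl fun i _ => (hproj i _ (hvi i)).symm
      _ ≤ ∑ i, ‖p i‖ * ‖vi i‖ := by gcongr with i; exact real_inner_le_norm _ _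
  have h₂ : (‖v‖ ^ 2) ^ 2 ≤ (∑ i, ‖p i‖ ^ 2) * (C₀ * ‖v‖ ^ 2) :=
    calc (‖v‖ ^ 2) ^ 2 ≤ (∑ i, ‖p i‖ * ‖vi i‖) ^ 2 := by gcongr
      _ ≤ (∑ i, ‖p i‖ ^ 2) * ∑ i, ‖vi i‖ ^ 2 := Finset.sum_mul_sq_le_sq_mul_sq _ _ _
      _ ≤ (∑ i, ‖p i‖ ^ 2) * (C₀ * ‖v‖ ^ 2) := by gcongr
  rcases (sq_nonneg ‖v‖).eq_or_lt with hv | hv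
  · rw [← hv]; positivity
  · nlinarith

lemma norm_sum_le_matSpectralNorm_mul_of_proj {N : ℕ} {Vs : Fin N → Submodule ℝ V} {v : V}
    {p : Fin N → V} (E : Matrix (Fin N) (Fin N) ℝ) (hp : ∀ i, p i ∈ Vs i)
    (hproj : ∀ i, ∀ w ∈ Vs i, ⟪p i, w⟫ = ⟪v, w⟫)
    (hE : ∀ i j, ⟪p i, p j⟫ ≤ E i j * ‖p i‖ * ‖p j‖) :
    ‖∑ i, p i‖ ≤ matSpectralNorm E * ‖v‖ := by
  have h : ‖∑ i, p i‖ ^ 2 ≤ matSpectralNorm E * ‖v‖ * ‖∑ i, p i‖ :=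
    calc ‖∑ i, p i‖ ^ 2 ≤ matSpectralNorm E * ∑ i, ‖p i‖ ^ 2 :=
          norm_sum_sq_le_matSpectralNorm_mul E p hE
      _ = matSpectralNorm E * ⟪v, ∑ i, p i⟫ := by rw [sum_norm_sq_eq_inner_sum_of_proj hp hproj]
      _ ≤ matSpectralNorm E * (‖v‖ * ‖∑ i, p i‖) := by
          gcongr
          · exact norm_nonneg _
          · exact real_inner_le_norm _ _
      _ = matSpectralNorm E * ‖v‖ * ‖∑ i, p i‖ := by ring
  have hE₀ : 0 ≤ matSpectralNorm E := norm_nonneg _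
  nlinarith [norm_nonneg (∑ i, p i), norm_nonneg v, mul_nonneg hE₀ (norm_nonneg v)]

lemma norm_sub_smul_sq_le {e u : V} {c M τ : ℝ} (hτ : 0 ≤ τ) (hc : c * ‖e‖ ^ 2 ≤ ⟪e, u⟫)
    (hM : ‖u‖ ^ 2 ≤ M * ‖e‖ ^ 2) :
    ‖e - τ • u‖ ^ 2 ≤ (1 - 2 * τ * c + M * τ ^ 2) * ‖e‖ ^ 2 := by
  rw [norm_sub_sq_real, real_inner_smul_right, norm_smul, mul_pow, Real.norm_eq_abs, sq_abs]
  nlinarith [mul_le_mul_of_nonneg_left hc hτ, mul_le_mul_of_nonneg_left hM (sq_nonneg τ)]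

end InnerProductSpace

theorem two_level_error_reduction_general {V : Type*} [NormedAddCommGroup V] [InnerProductSpace ℝ V]
    {N : ℕ} (Vs : Fin (N + 1) → Submodule ℝ V)
    (P : Fin (N + 1) → V →ₗ[ℝ] V)
    (hPmem : ∀ i (v : V), P i v ∈ Vs i)
    (hPproj : ∀ i (v : V), ∀ w ∈ Vs i, ⟪P i v, w⟫ = ⟪v, w⟫)
    (C₀ : ℝ) (hC₀ : 0 < C₀)
    (hdecomp : ∀ v : V, ∃ vi : Fin (N + 1) → V, (∀ i, vi i ∈ Vs i) ∧ v = ∑ i, vi i ∧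
      ∑ i, ⟪vi i, vi i⟫ ≤ C₀ * ⟪v, v⟫)
    (E : Matrix (Fin N) (Fin N) ℝ)
    (hCS : ∀ (i j : Fin N), ∀ vi ∈ Vs i.succ, ∀ vj ∈ Vs j.succ,
      ⟪vi, vj⟫ ≤ E i j * Real.sqrt ⟪vi, vi⟫ * Real.sqrt ⟪vj, vj⟫) :
    ∀ (e : V) (τ : ℝ), 0 < τ →
      ⟪e - τ • ∑ i, P i e, e - τ • ∑ i, P i e⟫
        ≤ (1 - 2 * τ / (2 + C₀) + 2 * ((matSpectralNorm E) ^ 2 + 1) * τ ^ 2) * ⟪e, e⟫ := by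
  intro e τ hτ
  set S := ∑ i, ‖P i e‖ ^ 2
  have hS : S = ⟪e, ∑ i, P i e⟫ := sum_norm_sq_eq_inner_sum_of_proj (hPmem · e) (hPproj · e)
  have hstable : ‖e‖ ^ 2 ≤ C₀ * S := by
    obtain ⟨vi, hvi, hsum, hstab⟩ := hdecomp e
    simp only [real_inner_self_eq_norm_sq] at hstab
    exact norm_sq_le_mul_sum_norm_sq_of_decomposition hC₀.le (hPproj · e) hvi hsum hstab
  have hlower : 1 / (2 + C₀) * ‖e‖ ^ 2 ≤ ⟪e, ∑ i, P i e⟫ := by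
    have : 0 ≤ S := by positivity
    rw [← hS, one_div_mul_eq_div, div_le_iff₀ (by positivity)]
    linarith
  have hcoarse : ‖P 0 e‖ ≤ ‖e‖ := norm_le_of_proj (hPmem 0 e) (hPproj 0 e)
  have hlocal : ‖∑ i : Fin N, P i.succ e‖ ≤ matSpectralNorm E * ‖e‖ :=
    norm_sum_le_matSpectralNorm_mul_of_proj E (fun i => hPmem i.succ e) (fun i => hPproj i.succ e)
      fun i j => by simpa only [← norm_eq_sqrt_real_inner] using hCS i j _ (hPmem _ e) _ (hPmem _ e)
  have hupper : ‖∑ i, P i e‖ ^ 2 ≤ 2 * (matSpectralNorm E ^ 2 + 1) * ‖e‖ ^ 2 :=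
    calc ‖∑ i, P i e‖ ^ 2 ≤ (‖P 0 e‖ + ‖∑ i : Fin N, P i.succ e‖) ^ 2 := by
          rw [Fin.sum_univ_succ]; gcongr; exact norm_add_le _ _
      _ ≤ 2 * (‖P 0 e‖ ^ 2 + ‖∑ i : Fin N, P i.succ e‖ ^ 2) := add_sq_le
      _ ≤ 2 * (‖e‖ ^ 2 + (matSpectralNorm E * ‖e‖) ^ 2) := by gcongr
      _ = 2 * (matSpectralNorm E ^ 2 + 1) * ‖e‖ ^ 2 := by ring
  simp only [real_inner_self_eq_norm_sq]
  convert norm_sub_smul_sq_le hτ.le hlower hupper using 2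
  ring

/-- Two-level additive Schwarz error reduction:
`a((I − τP)e, (I − τP)e) ≤ (1 − 2τ/(2+C₀) + 2(‖ℰ‖₂² + 1)τ²) a(e,e)`. -/
theorem two_level_error_reduction {V : Type*} [NormedAddCommGroup V] [InnerProductSpace ℝ V]
    {N : ℕ} (Vs : Fin (N + 1) → Submodule ℝ V) (hclosed : ∀ i, IsClosed (Vs i : Set V))
    (P : Fin (N + 1) → V →ₗ[ℝ] V)
    (hPmem : ∀ i (v : V), P i v ∈ Vs i)
    (hPproj : ∀ i (v : V), ∀ w ∈ Vs i, ⟪P i v, w⟫ = ⟪v, w⟫)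
    (C₀ : ℝ) (hC₀ : 0 < C₀)
    (hdecomp : ∀ v : V, ∃ vi : Fin (N + 1) → V, (∀ i, vi i ∈ Vs i) ∧ v = ∑ i, vi i ∧
      ∑ i, ⟪vi i, vi i⟫ ≤ C₀ * ⟪v, v⟫)
    (E : Matrix (Fin N) (Fin N) ℝ)
    (hE0 : ∀ i j, 0 ≤ E i j) (hE1 : ∀ i j, E i j ≤ 1)
    (hCS : ∀ (i j : Fin N), ∀ vi ∈ Vs i.succ, ∀ vj ∈ Vs j.succ,
      ⟪vi, vj⟫ ≤ E i j * Real.sqrt ⟪vi, vi⟫ * Real.sqrt ⟪vj, vj⟫) :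
    ∀ (e : V) (τ : ℝ), 0 < τ →
      ⟪e - τ • ∑ i, P i e, e - τ • ∑ i, P i e⟫
        ≤ (1 - 2 * τ / (2 + C₀) + 2 * ((matSpectralNorm E) ^ 2 + 1) * τ ^ 2) * ⟪e, e⟫ :=
  two_level_error_reduction_general Vs P hPmem hPproj C₀ hC₀ hdecomp E hCS
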